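/- Identify correlated policies with points of the simplex Δ(Π_det) and assume J^{π̃,k}(μ) is differentiable in π̃. For any two correlated policies π̃, π̃' ∈ Δ(Π_det), the directional derivative of J^{π̃,k}(μ) at π̃ in the direction π̃' − π̃ satisfies ∇_{π̃'−π̃} J^{π̃,k}(μ) ≤ (1/(1−γ^k)) · (J^{π̃',k}(μ) − J^{π̃,k}(μ)) + 6 γ^k g_max / ((1−γ^k)(1−γ)). (Approximate gradient dominance.) -/

import Mathlib

/-!
Write `β = γᵏ`, `M_v` for the `k`-step kernel and `c_v` for the block cost of a correlated
policy `v`, so that `J_v = (1 - β M_v)⁻¹ c_v`. The performance difference lemma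
`J_v - J_w = (1 - β M_v)⁻¹ (Q_w(v) - J_w)`, linearity of `v ↦ Q_w(v)` and the Bellman equation
`Q_w(w) = J_w` show that the difference quotient of `J(μ)` from `w` towards `w'` with step `t`
is `⟨ν_t, Q_w(w') - J_w⟩`, where `ν_t = μ (1 - β M_{w_t})⁻¹` is the (unnormalised) occupancy
measure of the intermediate policy `w_t`; at `t = 1` it is `J_{w'}(μ) - J_w(μ)`. Occupancy
measures dominate `μ` and have mass `1/(1-β)`, so any two differ by at most `2β/(1-β)` in `ℓ¹`.
As the advantage is bounded by `2 g_max/(1-γ)`, every difference quotient, hence the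
directional derivative, is at most `J_{w'}(μ) - J_w(μ) + 4β g_max/((1-β)(1-γ))`, and the claim
follows from `J_{w'}(μ) - J_w(μ) ≥ -2 g_max/(1-γ)`.
-/

open Finset

noncomputable section

variable {S A D : Type*} [Fintype S] [Fintype A] [Fintype D] [DecidableEq S]

/-- Transition matrix of a deterministic policy `pol`. -/
def detKernel (P : S → A → S → ℝ) (pol : S → A) : Matrix S S ℝ :=
  Matrix.of fun s s' => P s (pol s) s'

/-- Expected discounted cost incurred during the first `k` steps when following the
deterministic policy `pol` starting from state `s`. -/
def detCost (P : S → A → S → ℝ) (g : S → A → ℝ) (γ : ℝ) (pol : S → A) (k : ℕ) (s : S) : ℝ :=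
  ∑ t ∈ Finset.range k, γ ^ t * ∑ s', (detKernel P pol ^ t) s s' * g s' (pol s')

/-- Value function `J^{π_det}(s)` of a deterministic policy. -/
def detJ (P : S → A → S → ℝ) (g : S → A → ℝ) (γ : ℝ) (pol : S → A) (s : S) : ℝ :=
  ∑' t : ℕ, γ ^ t * ∑ s', (detKernel P pol ^ t) s s' * g s' (pol s')

/-- Value `J^{π_det}(μ)` of a deterministic policy from an initial distribution `μ`. -/
def detJInit (P : S → A → S → ℝ) (g : S → A → ℝ) (γ : ℝ) (pol : S → A) (μ : S → ℝ) : ℝ :=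
  ∑ s, μ s * detJ P g γ pol s

/-- The `k`-step transition kernel of the correlated policy with weights `w`
over the family `p` of deterministic policies. -/
def corKernel (P : S → A → S → ℝ) (p : D → S → A) (w : D → ℝ) (k : ℕ) : Matrix S S ℝ :=
  ∑ d, w d • (detKernel P (p d) ^ k)

/-- Expected discounted cost of one `k`-step block of the correlated policy from `s`. -/
def blockCost (P : S → A → S → ℝ) (g : S → A → ℝ) (γ : ℝ) (p : D → S → A) (w : D → ℝ)
    (k : ℕ) (s : S) : ℝ :=
  ∑ d, w d * detCost P g γ (p d) k s

/-- The `k`-step value function `J^{π̃,k}(s)` of the correlated policy `w`. -/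
def Jk (P : S → A → S → ℝ) (g : S → A → ℝ) (γ : ℝ) (p : D → S → A) (w : D → ℝ)
    (k : ℕ) (s : S) : ℝ :=
  ∑' m : ℕ, γ ^ (m * k) * ∑ s', (corKernel P p w k ^ m) s s' * blockCost P g γ p w k s'

/-- `J^{π̃,k}(μ)`. -/
def JkInit (P : S → A → S → ℝ) (g : S → A → ℝ) (γ : ℝ) (p : D → S → A) (w : D → ℝ)
    (k : ℕ) (μ : S → ℝ) : ℝ :=
  ∑ s, μ s * Jk P g γ p w k s

/-- The `k`-step Q-function `Q^{π̃,k}(s, π')` with deterministic second argument `pol`. -/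
def Qk (P : S → A → S → ℝ) (g : S → A → ℝ) (γ : ℝ) (p : D → S → A) (w : D → ℝ)
    (k : ℕ) (s : S) (pol : S → A) : ℝ :=
  detCost P g γ pol k s + γ ^ k * ∑ s', (detKernel P pol ^ k) s s' * Jk P g γ p w k s'

/-- The `k`-step Q-function `Q^{π̃,k}(s, π̃')` with correlated second argument `w'`. -/
def QkCor (P : S → A → S → ℝ) (g : S → A → ℝ) (γ : ℝ) (p : D → S → A) (w : D → ℝ)
    (k : ℕ) (s : S) (w' : D → ℝ) : ℝ :=
  ∑ d, w' d * Qk P g γ p w k s (p d)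

/-- The `k`-step discounted state occupancy measure `d_μ^{π̃,k}(s)`. -/
def dOcc (P : S → A → S → ℝ) (γ : ℝ) (p : D → S → A) (w : D → ℝ) (k : ℕ)
    (μ : S → ℝ) (s : S) : ℝ :=
  (1 - γ ^ k) * ∑' m : ℕ, γ ^ (m * k) * ∑ s0, μ s0 * (corKernel P p w k ^ m) s0 s

open Matrix
open scoped Ring

theorem Matrix.abs_dotProduct_le {n : Type*} [Fintype n] {r c : n → ℝ} {B : ℝ}
    (hr : ∀ j, 0 ≤ r j) (hc : ∀ j, |c j| ≤ B) : |r ⬝ᵥ c| ≤ (∑ j, r j) * B := by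
  rw [Finset.sum_mul]
  refine (Finset.abs_sum_le_sum_abs _ _).trans (Finset.sum_le_sum fun j _ => ?_)
  rw [abs_mul, abs_of_nonneg (hr j)]
  exact mul_le_mul_of_nonneg_left (hc j) (hr j)

theorem fderiv_apply_le_of_slope_le {E : Type*} [NormedAddCommGroup E] [NormedSpace ℝ E]
    {f : E → ℝ} {x v : E} {C : ℝ} (hf : DifferentiableAt ℝ f x)
    (h : ∀ t ∈ Set.Ioc (0 : ℝ) 1, (f (x + t • v) - f x) / t ≤ C) : fderiv ℝ f x v ≤ C := by
  refine le_of_tendsto (hf.hasFDerivAt.hasLineDerivAt v).tendsto_slope_zero_right ?_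
  filter_upwards [Ioc_mem_nhdsGT zero_lt_one] with t ht
  simpa [div_eq_inv_mul] using h t ht

section Resolvent

attribute [local instance] Matrix.linftyOpNormedRing Matrix.linftyOpNormedAlgebra

variable {n : Type*} [Fintype n] [DecidableEq n] {X Y : Matrix n n ℝ} {β : ℝ}

theorem Matrix.norm_le_one_of_mem_rowStochastic (hX : X ∈ rowStochastic ℝ n) : ‖X‖ ≤ 1 := by
  rw [linfty_opNorm_def, ← NNReal.coe_one, NNReal.coe_le_coe]
  refine Finset.sup_le fun i _ => le_of_eq ?_
  rw [← NNReal.coe_inj]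
  push_cast
  simp_rw [Real.norm_of_nonneg (hX.1 i _)]
  exact sum_row_of_mem_rowStochastic hX i

theorem Matrix.norm_smul_lt_one_of_mem_rowStochastic (hX : X ∈ rowStochastic ℝ n)
    (hβ0 : 0 ≤ β) (hβ1 : β < 1) : ‖β • X‖ < 1 := by
  rw [norm_smul, Real.norm_of_nonneg hβ0]
  nlinarith [norm_le_one_of_mem_rowStochastic hX, norm_nonneg X]

theorem Matrix.inverse_one_sub_smul_mul (hX : X ∈ rowStochastic ℝ n) (hβ0 : 0 ≤ β)
    (hβ1 : β < 1) : (1 - β • X)⁻¹ʳ * (1 - β • X) = 1 :=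
  Ring.inverse_mul_cancel _
    (isUnit_one_sub_of_norm_lt_one (norm_smul_lt_one_of_mem_rowStochastic hX hβ0 hβ1))

theorem Matrix.one_sub_smul_mul_inverse (hX : X ∈ rowStochastic ℝ n) (hβ0 : 0 ≤ β)
    (hβ1 : β < 1) : (1 - β • X) * (1 - β • X)⁻¹ʳ = 1 :=
  Ring.mul_inverse_cancel _
    (isUnit_one_sub_of_norm_lt_one (norm_smul_lt_one_of_mem_rowStochastic hX hβ0 hβ1))

theorem Matrix.hasSum_inverse_one_sub_smul_apply (hX : X ∈ rowStochastic ℝ n) (hβ0 : 0 ≤ β)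
    (hβ1 : β < 1) (i j : n) : HasSum (fun m => β ^ m * (X ^ m) i j) ((1 - β • X)⁻¹ʳ i j) := by
  simpa [Function.comp_def, smul_pow] using
    (hasSum_geom_series_inverse _ (norm_smul_lt_one_of_mem_rowStochastic hX hβ0 hβ1)).map
      (entryAddMonoidHom ℝ i j) (continuous_id.matrix_elem i j)

theorem Matrix.one_apply_le_inverse_one_sub_smul (hX : X ∈ rowStochastic ℝ n) (hβ0 : 0 ≤ β)
    (hβ1 : β < 1) (i j : n) : (1 : Matrix n n ℝ) i j ≤ (1 - β • X)⁻¹ʳ i j := by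
  simpa using le_hasSum (hasSum_inverse_one_sub_smul_apply hX hβ0 hβ1 i j) 0
    fun m _ => mul_nonneg (pow_nonneg hβ0 m) ((pow_mem hX m).1 i j)

theorem Matrix.inverse_one_sub_smul_nonneg (hX : X ∈ rowStochastic ℝ n) (hβ0 : 0 ≤ β)
    (hβ1 : β < 1) (i j : n) : 0 ≤ (1 - β • X)⁻¹ʳ i j :=
  ((rowStochastic ℝ n).one_mem.1 i j).trans (one_apply_le_inverse_one_sub_smul hX hβ0 hβ1 i j)

theorem Matrix.inverse_one_sub_smul_mulVec_one (hX : X ∈ rowStochastic ℝ n) (hβ0 : 0 ≤ β)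
    (hβ1 : β < 1) : (1 - β • X)⁻¹ʳ *ᵥ 1 = (1 - β)⁻¹ • 1 := by
  have hone : (1 - β • X) *ᵥ ((1 - β)⁻¹ • 1) = 1 := by
    rw [mulVec_smul, sub_mulVec, smul_mulVec, one_mulVec, hX.2]
    ext i
    simp only [Pi.smul_apply, Pi.sub_apply, Pi.one_apply, smul_eq_mul]
    field_simp [(by linarith : 1 - β ≠ 0)]
  calc (1 - β • X)⁻¹ʳ *ᵥ 1 = (1 - β • X)⁻¹ʳ *ᵥ ((1 - β • X) *ᵥ ((1 - β)⁻¹ • 1)) := by rw [hone]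
    _ = (1 - β)⁻¹ • 1 := by
      rw [mulVec_mulVec, inverse_one_sub_smul_mul hX hβ0 hβ1, one_mulVec]

theorem Matrix.abs_mulVec_le_of_mem_rowStochastic (hX : X ∈ rowStochastic ℝ n) {c : n → ℝ}
    {B : ℝ} (hc : ∀ j, |c j| ≤ B) (i : n) : |(X *ᵥ c) i| ≤ B := by
  have h := abs_dotProduct_le (fun j => hX.1 i j) hc
  rwa [sum_row_of_mem_rowStochastic hX, one_mul] at h

theorem Matrix.abs_inverse_one_sub_smul_mulVec_le (hX : X ∈ rowStochastic ℝ n) (hβ0 : 0 ≤ β)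
    (hβ1 : β < 1) {c : n → ℝ} {B : ℝ} (hc : ∀ j, |c j| ≤ B) (i : n) :
    |((1 - β • X)⁻¹ʳ *ᵥ c) i| ≤ (1 - β)⁻¹ * B := by
  have hrow : ∑ j, (1 - β • X)⁻¹ʳ i j = (1 - β)⁻¹ := by
    simpa [mulVec, dotProduct_one] using congrFun (inverse_one_sub_smul_mulVec_one hX hβ0 hβ1) i
  rw [← hrow]
  exact abs_dotProduct_le (inverse_one_sub_smul_nonneg hX hβ0 hβ1 i) hc

variable {μ : n → ℝ}

theorem Matrix.le_vecMul_inverse_one_sub_smul (hX : X ∈ rowStochastic ℝ n) (hβ0 : 0 ≤ β)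
    (hβ1 : β < 1) (hμ : ∀ i, 0 ≤ μ i) (j : n) : μ j ≤ (μ ᵥ* (1 - β • X)⁻¹ʳ) j := by
  conv_lhs => rw [← vecMul_one μ]
  exact Finset.sum_le_sum fun i _ =>
    mul_le_mul_of_nonneg_left (one_apply_le_inverse_one_sub_smul hX hβ0 hβ1 i j) (hμ i)

theorem Matrix.sum_vecMul_inverse_one_sub_smul (hX : X ∈ rowStochastic ℝ n) (hβ0 : 0 ≤ β)
    (hβ1 : β < 1) (hμ : ∑ i, μ i = 1) : ∑ j, (μ ᵥ* (1 - β • X)⁻¹ʳ) j = (1 - β)⁻¹ := by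
  rw [← dotProduct_one, ← dotProduct_mulVec, inverse_one_sub_smul_mulVec_one hX hβ0 hβ1,
    dotProduct_smul, dotProduct_one, hμ, smul_eq_mul, mul_one]

theorem Matrix.vecMul_inverse_one_sub_smul_dotProduct_le (hX : X ∈ rowStochastic ℝ n)
    (hY : Y ∈ rowStochastic ℝ n) (hβ0 : 0 ≤ β) (hβ1 : β < 1) (hμ : μ ∈ stdSimplex ℝ n)
    {ℓ : n → ℝ} {L : ℝ} (hℓ : ∀ i, |ℓ i| ≤ L) :
    (μ ᵥ* (1 - β • X)⁻¹ʳ) ⬝ᵥ ℓ ≤ (μ ᵥ* (1 - β • Y)⁻¹ʳ) ⬝ᵥ ℓ + 2 * β / (1 - β) * L := by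
  set a := μ ᵥ* (1 - β • X)⁻¹ʳ
  set b := μ ᵥ* (1 - β • Y)⁻¹ʳ
  have ha := le_vecMul_inverse_one_sub_smul hX hβ0 hβ1 hμ.1
  have hb := le_vecMul_inverse_one_sub_smul hY hβ0 hβ1 hμ.1
  have hterm : ∀ j, (a j - b j) * ℓ j ≤ ((a j - μ j) + (b j - μ j)) * L := fun j => by
    have hab : |a j - b j| ≤ (a j - μ j) + (b j - μ j) := by
      rw [abs_le]; constructor <;> linarith [ha j, hb j]
    calc (a j - b j) * ℓ j ≤ |a j - b j| * |ℓ j| := by rw [← abs_mul]; exact le_abs_self _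
      _ ≤ ((a j - μ j) + (b j - μ j)) * L :=
        mul_le_mul hab (hℓ j) (abs_nonneg _) (by linarith [ha j, hb j])
  have hmass : ∑ j, ((a j - μ j) + (b j - μ j)) = 2 * β / (1 - β) := by
    simp only [Finset.sum_add_distrib, Finset.sum_sub_distrib, a, b, hμ.2,
      sum_vecMul_inverse_one_sub_smul hX hβ0 hβ1 hμ.2,
      sum_vecMul_inverse_one_sub_smul hY hβ0 hβ1 hμ.2]
    field_simp [(by linarith : 1 - β ≠ 0)]
    ring
  have hsum := Finset.sum_le_sum fun j (_ : j ∈ Finset.univ) => hterm j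
  rw [← Finset.sum_mul, hmass] at hsum
  have hdiff : a ⬝ᵥ ℓ - b ⬝ᵥ ℓ = ∑ j, (a j - b j) * ℓ j := by
    simp only [dotProduct, sub_mul, Finset.sum_sub_distrib]
  linarith

end Resolvent

section KStepMDP

set_option linter.unusedSectionVars false

variable {P : S → A → S → ℝ} {g : S → A → ℝ} {γ gmax : ℝ} {p : D → S → A} {k : ℕ}
  {v w w' : D → ℝ}

def IsTransitionFunction (P : S → A → S → ℝ) : Prop :=
  ∀ s a, (∀ s', 0 ≤ P s a s') ∧ ∑ s', P s a s' = 1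

theorem detKernel_mem_rowStochastic (hP : IsTransitionFunction P) (pol : S → A) :
    detKernel P pol ∈ rowStochastic ℝ S :=
  mem_rowStochastic_iff_sum.2 ⟨fun s s' => (hP s (pol s)).1 s', fun s => (hP s (pol s)).2⟩

theorem corKernel_mem_rowStochastic (hP : IsTransitionFunction P) (hw : w ∈ stdSimplex ℝ D) :
    corKernel P p w k ∈ rowStochastic ℝ S :=
  convex_rowStochastic.sum_mem (fun d _ => hw.1 d) hw.2 fun _ _ =>
    pow_mem (detKernel_mem_rowStochastic hP _) k

theorem abs_detCost_le (hP : IsTransitionFunction P) (hg : ∀ s a, |g s a| ≤ gmax)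
    (hγ0 : 0 ≤ γ) (hγ1 : γ < 1) (pol : S → A) (k : ℕ) (s : S) :
    |detCost P g γ pol k s| ≤ (1 - γ ^ k) * (gmax / (1 - γ)) :=
  calc |detCost P g γ pol k s|
      ≤ ∑ t ∈ Finset.range k, γ ^ t * gmax := by
        refine (Finset.abs_sum_le_sum_abs _ _).trans (Finset.sum_le_sum fun t _ => ?_)
        rw [abs_mul, abs_of_nonneg (pow_nonneg hγ0 t)]
        exact mul_le_mul_of_nonneg_left (abs_mulVec_le_of_mem_rowStochastic
          (pow_mem (detKernel_mem_rowStochastic hP pol) t) (fun s' => hg s' (pol s')) s)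
          (pow_nonneg hγ0 t)
    _ = (1 - γ ^ k) * (gmax / (1 - γ)) := by
        rw [← Finset.sum_mul, geom_sum_eq hγ1.ne]
        field_simp [(by linarith : 1 - γ ≠ 0), (by linarith : γ - 1 ≠ 0)]
        ring

theorem abs_blockCost_le (hP : IsTransitionFunction P) (hg : ∀ s a, |g s a| ≤ gmax)
    (hγ0 : 0 ≤ γ) (hγ1 : γ < 1) (hw : w ∈ stdSimplex ℝ D) (s : S) :
    |blockCost P g γ p w k s| ≤ (1 - γ ^ k) * (gmax / (1 - γ)) := by
  have h := abs_dotProduct_le hw.1 fun d => abs_detCost_le hP hg hγ0 hγ1 (p d) k s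
  rwa [hw.2, one_mul] at h

theorem Jk_eq_inverse_mulVec (hP : IsTransitionFunction P) (hw : w ∈ stdSimplex ℝ D)
    (hγ0 : 0 ≤ γ) (hγk : γ ^ k < 1) :
    Jk P g γ p w k = (1 - γ ^ k • corKernel P p w k)⁻¹ʳ *ᵥ blockCost P g γ p w k := by
  funext s
  have hM := corKernel_mem_rowStochastic (k := k) (p := p) hP hw
  have h := hasSum_sum fun s' (_ : s' ∈ Finset.univ) =>
    (hasSum_inverse_one_sub_smul_apply hM (pow_nonneg hγ0 k) hγk s s').mul_right
      (blockCost P g γ p w k s')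
  refine Eq.trans (tsum_congr fun m => ?_) h.tsum_eq
  rw [Finset.mul_sum, mul_comm m k, pow_mul]
  exact Finset.sum_congr rfl fun _ _ => (mul_assoc _ _ _).symm

theorem abs_Jk_le (hP : IsTransitionFunction P) (hg : ∀ s a, |g s a| ≤ gmax) (hγ0 : 0 ≤ γ)
    (hγ1 : γ < 1) (hγk : γ ^ k < 1) (hw : w ∈ stdSimplex ℝ D) (s : S) :
    |Jk P g γ p w k s| ≤ gmax / (1 - γ) := by
  rw [Jk_eq_inverse_mulVec hP hw hγ0 hγk]
  refine (abs_inverse_one_sub_smul_mulVec_le (corKernel_mem_rowStochastic hP hw)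
    (pow_nonneg hγ0 k) hγk (abs_blockCost_le hP hg hγ0 hγ1 hw) s).trans_eq ?_
  field_simp [(by linarith : 1 - γ ^ k ≠ 0)]

theorem abs_JkInit_le (hP : IsTransitionFunction P) (hg : ∀ s a, |g s a| ≤ gmax) (hγ0 : 0 ≤ γ)
    (hγ1 : γ < 1) (hγk : γ ^ k < 1) {μ : S → ℝ} (hμ : μ ∈ stdSimplex ℝ S)
    (hw : w ∈ stdSimplex ℝ D) : |JkInit P g γ p w k μ| ≤ gmax / (1 - γ) := by
  have h := abs_dotProduct_le hμ.1 (abs_Jk_le (p := p) hP hg hγ0 hγ1 hγk hw)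
  rwa [hμ.2, one_mul] at h

theorem QkCor_eq (v : D → ℝ) :
    (fun s => QkCor P g γ p w k s v) =
      blockCost P g γ p v k + γ ^ k • (corKernel P p v k *ᵥ Jk P g γ p w k) := by
  funext s
  simp only [QkCor, Qk, blockCost, corKernel, Pi.add_apply, Pi.smul_apply, smul_eq_mul,
    sum_mulVec, smul_mulVec, Finset.sum_apply, mul_add, Finset.sum_add_distrib, Finset.mul_sum]
  congr 1
  refine Finset.sum_congr rfl fun d _ => ?_
  simp only [mulVec, dotProduct, Finset.mul_sum]
  exact Finset.sum_congr rfl fun _ _ => by ring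

theorem abs_QkCor_le (hP : IsTransitionFunction P) (hg : ∀ s a, |g s a| ≤ gmax) (hγ0 : 0 ≤ γ)
    (hγ1 : γ < 1) (hγk : γ ^ k < 1) (hw : w ∈ stdSimplex ℝ D) (hw' : w' ∈ stdSimplex ℝ D)
    (s : S) : |QkCor P g γ p w k s w'| ≤ gmax / (1 - γ) := by
  have hc := abs_blockCost_le (p := p) (k := k) hP hg hγ0 hγ1 hw' s
  have hMJ := abs_mulVec_le_of_mem_rowStochastic
    (corKernel_mem_rowStochastic (p := p) (k := k) hP hw')
    (abs_Jk_le (p := p) hP hg hγ0 hγ1 hγk hw) s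
  rw [congrFun (QkCor_eq w') s, Pi.add_apply, Pi.smul_apply, smul_eq_mul]
  calc _ ≤ |blockCost P g γ p w' k s| + γ ^ k * |(corKernel P p w' k *ᵥ Jk P g γ p w k) s| := by
        rw [← abs_of_nonneg (pow_nonneg hγ0 k), ← abs_mul, abs_of_nonneg (pow_nonneg hγ0 k)]
        exact abs_add_le _ _
    _ ≤ (1 - γ ^ k) * (gmax / (1 - γ)) + γ ^ k * (gmax / (1 - γ)) :=
        add_le_add hc (mul_le_mul_of_nonneg_left hMJ (pow_nonneg hγ0 k))
    _ = gmax / (1 - γ) := by ring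

theorem QkCor_self (hP : IsTransitionFunction P) (hw : w ∈ stdSimplex ℝ D) (hγ0 : 0 ≤ γ)
    (hγk : γ ^ k < 1) : (fun s => QkCor P g γ p w k s w) = Jk P g γ p w k := by
  have hM := corKernel_mem_rowStochastic (k := k) (p := p) hP hw
  have h := congrArg (· *ᵥ blockCost P g γ p w k)
    (one_sub_smul_mul_inverse hM (pow_nonneg hγ0 k) hγk)
  simp only [← mulVec_mulVec, one_mulVec, sub_mulVec, smul_mulVec] at h
  rw [QkCor_eq, Jk_eq_inverse_mulVec hP hw hγ0 hγk]
  exact (sub_eq_iff_eq_add.1 h).symm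

theorem QkCor_add_smul_sub (hP : IsTransitionFunction P) (hw : w ∈ stdSimplex ℝ D)
    (hγ0 : 0 ≤ γ) (hγk : γ ^ k < 1) (w' : D → ℝ) (t : ℝ) :
    (fun s => QkCor P g γ p w k s (w + t • (w' - w))) - Jk P g γ p w k =
      t • ((fun s => QkCor P g γ p w k s w') - Jk P g γ p w k) := by
  rw [← QkCor_self hP hw hγ0 hγk]
  funext s
  simp only [QkCor, Pi.sub_apply, Pi.smul_apply, Pi.add_apply, smul_eq_mul, add_mul, sub_mul,
    Finset.sum_add_distrib, Finset.sum_sub_distrib, mul_assoc, ← Finset.mul_sum]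
  ring

theorem Jk_sub_Jk (hP : IsTransitionFunction P) (hv : v ∈ stdSimplex ℝ D) (hγ0 : 0 ≤ γ)
    (hγk : γ ^ k < 1) :
    Jk P g γ p v k - Jk P g γ p w k =
      (1 - γ ^ k • corKernel P p v k)⁻¹ʳ *ᵥ
        ((fun s => QkCor P g γ p w k s v) - Jk P g γ p w k) := by
  have hM := corKernel_mem_rowStochastic (k := k) (p := p) hP hv
  have hadv : (fun s => QkCor P g γ p w k s v) - Jk P g γ p w k =
      blockCost P g γ p v k - (1 - γ ^ k • corKernel P p v k) *ᵥ Jk P g γ p w k := by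
    rw [QkCor_eq, sub_mulVec, one_mulVec, smul_mulVec]
    abel
  rw [hadv, mulVec_sub, mulVec_mulVec, inverse_one_sub_smul_mul hM (pow_nonneg hγ0 k) hγk,
    one_mulVec, Jk_eq_inverse_mulVec hP hv hγ0 hγk]

theorem JkInit_sub_JkInit (hP : IsTransitionFunction P) (hv : v ∈ stdSimplex ℝ D) (hγ0 : 0 ≤ γ)
    (hγk : γ ^ k < 1) (μ : S → ℝ) :
    JkInit P g γ p v k μ - JkInit P g γ p w k μ =
      (μ ᵥ* (1 - γ ^ k • corKernel P p v k)⁻¹ʳ) ⬝ᵥ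
        ((fun s => QkCor P g γ p w k s v) - Jk P g γ p w k) := by
  change μ ⬝ᵥ Jk P g γ p v k - μ ⬝ᵥ Jk P g γ p w k = _
  rw [← dotProduct_sub, Jk_sub_Jk hP hv hγ0 hγk, dotProduct_mulVec]

theorem JkInit_slope_le (hP : IsTransitionFunction P) (hg : ∀ s a, |g s a| ≤ gmax)
    (hγ0 : 0 ≤ γ) (hγ1 : γ < 1) (hγk : γ ^ k < 1) {μ : S → ℝ} (hμ : μ ∈ stdSimplex ℝ S)
    (hw : w ∈ stdSimplex ℝ D) (hw' : w' ∈ stdSimplex ℝ D) {t : ℝ} (ht : t ∈ Set.Ioc 0 1) :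
    (JkInit P g γ p (w + t • (w' - w)) k μ - JkInit P g γ p w k μ) / t ≤
      JkInit P g γ p w' k μ - JkInit P g γ p w k μ +
        2 * γ ^ k / (1 - γ ^ k) * (2 * (gmax / (1 - γ))) := by
  have hwt : w + t • (w' - w) ∈ stdSimplex ℝ D :=
    (convex_stdSimplex ℝ D).add_smul_sub_mem hw hw' ⟨ht.1.le, ht.2⟩
  have hadv : ∀ s, |QkCor P g γ p w k s w' - Jk P g γ p w k s| ≤ 2 * (gmax / (1 - γ)) :=
    fun s => by
      have hQ := abs_QkCor_le (p := p) hP hg hγ0 hγ1 hγk hw hw' s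
      have hJ := abs_Jk_le (p := p) hP hg hγ0 hγ1 hγk hw s
      linarith [abs_sub (QkCor P g γ p w k s w') (Jk P g γ p w k s)]
  rw [JkInit_sub_JkInit hP hwt hγ0 hγk, QkCor_add_smul_sub hP hw hγ0 hγk, dotProduct_smul,
    smul_eq_mul, mul_div_cancel_left₀ _ ht.1.ne', JkInit_sub_JkInit hP hw' hγ0 hγk]
  exact vecMul_inverse_one_sub_smul_dotProduct_le (corKernel_mem_rowStochastic hP hwt)
    (corKernel_mem_rowStochastic hP hw') (pow_nonneg hγ0 k) hγk hμ hadv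

end KStepMDP

/-- **Approximate gradient dominance.** Identifying correlated policies with points of
the simplex `Δ(Π_det)`, for any two correlated policies `w, w' ∈ Δ(Π_det)` the
directional derivative of `π̃ ↦ J^{π̃,k}(μ)` at `w` in the direction `w' − w` satisfies
`∇_{π̃'−π̃} J^{π̃,k}(μ) ≤ (1/(1−γ^k))(J^{π̃',k}(μ) − J^{π̃,k}(μ)) + 6 γ^k g_max/((1−γ^k)(1−γ))`. -/
theorem approximate_gradient_dominance
    (P : S → A → S → ℝ) (g : S → A → ℝ) (γ gmax : ℝ) (μ : S → ℝ)
    (p : D → S → A) (k : ℕ) (w w' : D → ℝ)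
    (hP : ∀ s a, (∀ s', 0 ≤ P s a s') ∧ ∑ s', P s a s' = 1)
    (hg : ∀ s a, |g s a| ≤ gmax)
    (hγ0 : 0 < γ) (hγ1 : γ < 1)
    (hμ : μ ∈ stdSimplex ℝ S)
    (hk : 1 ≤ k)
    (hw : w ∈ stdSimplex ℝ D) (hw' : w' ∈ stdSimplex ℝ D)
    (hdiff : DifferentiableAt ℝ (fun v : D → ℝ => JkInit P g γ p v k μ) w) :
    fderiv ℝ (fun v : D → ℝ => JkInit P g γ p v k μ) w (w' - w) ≤
      (1 / (1 - γ ^ k)) * (JkInit P g γ p w' k μ - JkInit P g γ p w k μ) +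
        6 * γ ^ k * gmax / ((1 - γ ^ k) * (1 - γ)) := by
  have hγk : γ ^ k < 1 := pow_lt_one₀ hγ0.le hγ1 (by omega)
  have hD := fderiv_apply_le_of_slope_le hdiff fun t ht =>
    JkInit_slope_le hP hg hγ0.le hγ1 hγk hμ hw hw' ht
  set Δ := JkInit P g γ p w' k μ - JkInit P g γ p w k μ
  set G := gmax / (1 - γ)
  have hΔ : -(2 * G) ≤ Δ := by
    linarith [abs_le.1 (abs_JkInit_le (p := p) hP hg hγ0.le hγ1 hγk hμ hw),
      abs_le.1 (abs_JkInit_le (p := p) hP hg hγ0.le hγ1 hγk hμ hw')]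
  have hbias : 0 ≤ γ ^ k / (1 - γ ^ k) * (Δ + 2 * G) :=
    mul_nonneg (div_nonneg (pow_nonneg hγ0.le k) (by linarith)) (by linarith)
  have hsplit : 1 / (1 - γ ^ k) * Δ + 6 * γ ^ k * gmax / ((1 - γ ^ k) * (1 - γ)) =
      Δ + 2 * γ ^ k / (1 - γ ^ k) * (2 * G) + γ ^ k / (1 - γ ^ k) * (Δ + 2 * G) := by
    simp only [G]
    field_simp [(by linarith : 1 - γ ^ k ≠ 0), (by linarith : 1 - γ ≠ 0)]
    ring
  linarith
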